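/- If a preference profile satisfies MaxProp, then every woman other than the unique woman who receives exactly one proposal is matched by the men-proposing DA to her most preferred man. -/

import Mathlib

open scoped Classical

noncomputable section

/-- A two-sided matching market with `n` men and `n` women, each with a complete
strict preference order over the other side. `mpref m k` is man `m`'s `k`-th
favourite woman (0 = top), and `wpref w k` is woman `w`'s `k`-th favourite man. -/
structure Profile (n : ℕ) where
  mpref : Fin n → (Fin n ≃ Fin n)
  wpref : Fin n → (Fin n ≃ Fin n)

namespace Profile

variable {n : ℕ}

/-- rank (0 = best) of woman `w` in man `m`'s preference list -/
def mrank (P : Profile n) (m w : Fin n) : ℕ := ((P.mpref m).symm w : ℕ)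

/-- rank (0 = best) of man `m` in woman `w`'s preference list -/
def wrank (P : Profile n) (w m : Fin n) : ℕ := ((P.wpref w).symm m : ℕ)

/-- man `m` strictly prefers woman `w` to woman `w'` -/
def mPrefers (P : Profile n) (m w w' : Fin n) : Prop := P.mrank m w < P.mrank m w'

/-- woman `w` strictly prefers man `m` to man `m'` -/
def wPrefers (P : Profile n) (w m m' : Fin n) : Prop := P.wrank w m < P.wrank w m'

/-- top choice of man `m` -/
def topM (P : Profile n) (m : Fin n) : Fin n := P.mpref m ⟨0, m.pos⟩

/-- top choice of woman `w` -/
def topW (P : Profile n) (w : Fin n) : Fin n := P.wpref w ⟨0, w.pos⟩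

/-- the profile with the roles of men and women exchanged -/
def swap (P : Profile n) : Profile n := ⟨P.wpref, P.mpref⟩

/-- State of the men-proposing deferred acceptance algorithm:
`next m` = number of proposals man `m` has made so far,
`held w` = the man woman `w` currently tentatively holds (if any). -/
structure DAState (n : ℕ) where
  next : Fin n → ℕ
  held : Fin n → Option (Fin n)

def initState (n : ℕ) : DAState n := ⟨fun _ => 0, fun _ => none⟩

/-- the men currently unmatched (held by no woman) -/
def unmatched (s : DAState n) : Finset (Fin n) :=
  Finset.univ.filter fun m => ∀ w : Fin n, s.held w ≠ some m

/-- the woman man `m` proposes to next: his most preferred woman among those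
who have not rejected him yet -/
def target (P : Profile n) (s : DAState n) (m : Fin n) : Fin n :=
  P.mpref m ⟨s.next m % n, Nat.mod_lt _ m.pos⟩

/-- the men proposing to woman `w` in the current round -/
def proposers (P : Profile n) (s : DAState n) (w : Fin n) : Finset (Fin n) :=
  (unmatched s).filter fun m => target P s m = w

/-- one round of the men-proposing deferred acceptance algorithm: every
unmatched man proposes to his favourite woman who has not rejected him yet,
and every woman tentatively holds her favourite among her current partner
and the new proposers, rejecting the rest -/
def step (P : Profile n) (s : DAState n) : DAState n where
  next := fun m => if m ∈ unmatched s then s.next m + 1 else s.next m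
  held := fun w => ((proposers P s w ∪ (s.held w).toFinset).toList).argmin (P.wrank w)

/-- the state after `k` rounds of men-proposing deferred acceptance -/
def stateAt (P : Profile n) (k : ℕ) : DAState n := (step P)^[k] (initState n)

/-- the final state of men-proposing deferred acceptance
(`n * n + 1` iterations is always enough to reach the fixed point) -/
def finalState (P : Profile n) : DAState n := stateAt P (n * n + 1)

/-- total number of proposals made during the men-proposing DA -/
def totalProposals (P : Profile n) : ℕ := ∑ m : Fin n, (finalState P).next m

/-- number of rounds of the men-proposing DA (rounds in which some proposal is made) -/
def rounds (P : Profile n) : ℕ :=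
  ((Finset.range (n * n + 1)).filter fun k => (unmatched (stateAt P k)).Nonempty).card

/-- total number of proposals received by woman `w` during the men-proposing DA -/
def proposalsTo (P : Profile n) (w : Fin n) : ℕ :=
  ∑ k ∈ Finset.range (n * n + 1), (proposers P (stateAt P k) w).card

/-- man `m` proposes to woman `w` at some point during the men-proposing DA -/
def proposedTo (P : Profile n) (m w : Fin n) : Prop :=
  ∃ k < n * n + 1, m ∈ proposers P (stateAt P k) w

/-- the men-proposing DA makes the maximum possible number `n² - n + 1` of proposals -/
def MaxProp (P : Profile n) : Prop := P.totalProposals = n * n + 1 - n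

/-- the men-proposing DA takes the maximum possible number `n² - 2n + 2` of rounds -/
def MaxRou (P : Profile n) : Prop := P.rounds = n * n + 2 - 2 * n

/-- a matching (a bijection man ↦ woman) is stable iff no man-woman pair mutually
prefer each other to their assigned partners -/
def Stable (P : Profile n) (μ : Fin n ≃ Fin n) : Prop :=
  ¬ ∃ (m w : Fin n), P.mPrefers m w (μ m) ∧ P.wPrefers w m (μ.symm w)

/-- the profile admits a unique stable matching -/
def USM (P : Profile n) : Prop := ∃! μ : Fin n ≃ Fin n, P.Stable μ

/-- the sequential preference condition of Eeckhout (2000) -/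
def SPC (P : Profile n) : Prop :=
  ∃ σ τ : Equiv.Perm (Fin n), ∀ i j : Fin n, i < j →
    P.mPrefers (σ i) (τ i) (τ j) ∧ P.wPrefers (τ i) (σ i) (σ j)

/-- the no crossing condition of Clark (2006) -/
def NCC (P : Profile n) : Prop :=
  ∃ σ τ : Equiv.Perm (Fin n), ∀ i j k l : Fin n, i < j → k < l →
    (P.mPrefers (σ i) (τ l) (τ k) → P.mPrefers (σ j) (τ l) (τ k)) ∧
    (P.wPrefers (τ k) (σ j) (σ i) → P.wPrefers (τ l) (σ j) (σ i))

end Profile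

/-!
Each man proposes to each woman at most once, so every woman receives at most `n` proposals.
MaxProp says that the `n` women together receive `n² - n + 1` proposals; since one of them
receives only one, each of the others must receive `n`, i.e. one from every man. A woman who
was proposed to by her favourite man never lets him go: from then on she always holds a man
she likes at least as much as every man who has proposed to her.
-/

namespace Profile

variable {n : ℕ} {P : Profile n} {s : DAState n}

@[simp]
lemma mem_unmatched {m : Fin n} : m ∈ unmatched s ↔ ∀ w, s.held w ≠ some m := by
  simp [unmatched]

@[simp]
lemma mem_proposers {m w : Fin n} :
    m ∈ proposers P s w ↔ m ∈ unmatched s ∧ target P s m = w := by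
  simp [proposers]

lemma next_step (P : Profile n) (s : DAState n) (m : Fin n) :
    (step P s).next m = if m ∈ unmatched s then s.next m + 1 else s.next m := rfl

lemma stateAt_succ (P : Profile n) (k : ℕ) : stateAt P (k + 1) = step P (stateAt P k) :=
  Function.iterate_succ_apply' _ _ _

lemma next_stateAt_mono (P : Profile n) (m : Fin n) {k k' : ℕ} (h : k ≤ k') :
    (stateAt P k).next m ≤ (stateAt P k').next m := by
  induction k', h using Nat.le_induction with
  | base => exact le_rfl
  | succ k' _ ih =>
    rw [stateAt_succ, next_step]
    split <;> omega

lemma mem_of_held_step {w m : Fin n} (h : (step P s).held w = some m) :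
    m ∈ proposers P s w ∪ (s.held w).toFinset :=
  Finset.mem_toList.mp (List.argmin_mem h)

lemma exists_held_step_le {w a : Fin n} (ha : a ∈ proposers P s w ∪ (s.held w).toFinset) :
    ∃ m, (step P s).held w = some m ∧ P.wrank w m ≤ P.wrank w a := by
  have ha' := Finset.mem_toList.mpr ha
  cases h : (step P s).held w with
  | none => simp [List.argmin_eq_none.mp h] at ha'
  | some m => exact ⟨m, rfl, List.le_of_mem_argmin ha' h⟩

lemma exists_held_step_le_of_held {w a : Fin n} (ha : s.held w = some a) :
    ∃ m, (step P s).held w = some m ∧ P.wrank w m ≤ P.wrank w a :=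
  exists_held_step_le (Finset.mem_union_right _ (by simp [ha]))

/-- `next m` counts the women `m` has proposed to: exactly those of `mrank` below `next m`. -/
structure DAInvariant (P : Profile n) (s : DAState n) : Prop where
  next_le : ∀ m, s.next m ≤ n
  mrank_add_one_of_held : ∀ w m, s.held w = some m → P.mrank m w + 1 = s.next m
  exists_held_le_of_mrank_lt : ∀ m w, P.mrank m w < s.next m →
    ∃ m', s.held w = some m' ∧ P.wrank w m' ≤ P.wrank w m

namespace DAInvariant

/-- If `m` had proposed to all `n` women, all of them would hold a man, and distinct women
hold distinct men, so `m` would be held. -/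
lemma next_lt_of_mem_unmatched (hI : DAInvariant P s) {m : Fin n} (hm : m ∈ unmatched s) :
    s.next m < n := by
  by_contra! hge
  have hnext : s.next m = n := le_antisymm (hI.next_le m) hge
  choose f hf _ using fun w => hI.exists_held_le_of_mrank_lt m w
    (by rw [hnext]; exact ((P.mpref m).symm w).isLt)
  have hf_inj : Function.Injective f := by
    intro w w' hww'
    have h₁ := hI.mrank_add_one_of_held w _ (hf w)
    have h₂ := hI.mrank_add_one_of_held w' _ (hf w')
    rw [hww'] at h₁
    exact (P.mpref (f w')).symm.injective (Fin.ext (by unfold mrank at h₁ h₂; omega))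
  obtain ⟨w, rfl⟩ := (Finite.injective_iff_surjective.mp hf_inj) m
  exact mem_unmatched.mp hm w (hf w)

lemma target_eq_iff (hI : DAInvariant P s) {m : Fin n} (hm : m ∈ unmatched s) (w : Fin n) :
    target P s m = w ↔ P.mrank m w = s.next m := by
  have hlt := hI.next_lt_of_mem_unmatched hm
  have hfin : (⟨s.next m % n, Nat.mod_lt _ m.pos⟩ : Fin n) = ⟨s.next m, hlt⟩ :=
    Fin.ext (Nat.mod_eq_of_lt hlt)
  rw [target, hfin, ← Equiv.eq_symm_apply, mrank, Fin.ext_iff]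
  exact eq_comm

lemma mrank_eq_next_of_mem_proposers (hI : DAInvariant P s) {m w : Fin n}
    (hm : m ∈ proposers P s w) : P.mrank m w = s.next m :=
  (hI.target_eq_iff (mem_proposers.mp hm).1 w).mp (mem_proposers.mp hm).2

lemma step (hI : DAInvariant P s) : DAInvariant P (step P s) where
  next_le m := by
    rw [next_step]
    split
    · exact hI.next_lt_of_mem_unmatched ‹_›
    · exact hI.next_le m
  mrank_add_one_of_held w m hm := by
    rcases Finset.mem_union.mp (mem_of_held_step hm) with hp | hh
    · rw [next_step, if_pos (mem_proposers.mp hp).1, hI.mrank_eq_next_of_mem_proposers hp]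
    · have hh : s.held w = some m := by simpa using hh
      have hnu : m ∉ unmatched s := fun hu => mem_unmatched.mp hu w hh
      rw [next_step, if_neg hnu]
      exact hI.mrank_add_one_of_held w m hh
  exists_held_le_of_mrank_lt m w hlt := by
    by_cases hnew : m ∈ unmatched s ∧ P.mrank m w = s.next m
    · have hp : m ∈ proposers P s w :=
        mem_proposers.mpr ⟨hnew.1, (hI.target_eq_iff hnew.1 w).mpr hnew.2⟩
      exact exists_held_step_le (Finset.mem_union_left _ hp)
    · have hold : P.mrank m w < s.next m := by
        rw [next_step] at hlt
        split_ifs at hlt with hu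
        · have := not_and.mp hnew hu
          omega
        · exact hlt
      obtain ⟨m', hm', hle⟩ := hI.exists_held_le_of_mrank_lt m w hold
      obtain ⟨m'', hm'', hle'⟩ := exists_held_step_le_of_held (P := P) hm'
      exact ⟨m'', hm'', hle'.trans hle⟩

end DAInvariant

lemma daInvariant_stateAt (P : Profile n) (k : ℕ) : DAInvariant P (stateAt P k) := by
  induction k with
  | zero =>
    exact ⟨fun _ => Nat.zero_le n, by simp [stateAt, initState], by simp [stateAt, initState]⟩
  | succ k ih => rw [stateAt_succ]; exact ih.step

lemma mrank_lt_next_stateAt {m w : Fin n} {k k' : ℕ} (hm : m ∈ proposers P (stateAt P k) w)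
    (hkk' : k < k') : P.mrank m w < (stateAt P k').next m := by
  have hsucc : (stateAt P (k + 1)).next m = (stateAt P k).next m + 1 := by
    rw [stateAt_succ, next_step, if_pos (mem_proposers.mp hm).1]
  have := (daInvariant_stateAt P k).mrank_eq_next_of_mem_proposers hm
  have := next_stateAt_mono P m (show k + 1 ≤ k' from hkk')
  omega

lemma next_stateAt_eq_sum (P : Profile n) (m : Fin n) (K : ℕ) :
    (stateAt P K).next m =
      ∑ k ∈ Finset.range K, if m ∈ unmatched (stateAt P k) then 1 else 0 := by
  induction K with
  | zero => simp [stateAt, initState]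
  | succ K ih => rw [stateAt_succ, next_step, Finset.sum_range_succ, ← ih]; split <;> rfl

lemma card_unmatched_eq_sum_card_proposers (P : Profile n) (s : DAState n) :
    (unmatched s).card = ∑ w, (proposers P s w).card :=
  Finset.card_eq_sum_card_fiberwise fun m _ => Finset.mem_univ (target P s m)

lemma totalProposals_eq_sum_proposalsTo (P : Profile n) :
    P.totalProposals = ∑ w, P.proposalsTo w := by
  simp only [totalProposals, proposalsTo, finalState, next_stateAt_eq_sum]
  rw [Finset.sum_comm]
  simp only [Finset.sum_boole, Finset.filter_mem_eq_inter, Finset.univ_inter, Nat.cast_id,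
    card_unmatched_eq_sum_card_proposers P]
  exact Finset.sum_comm

lemma proposalsTo_eq_card_biUnion (P : Profile n) (w : Fin n) :
    P.proposalsTo w =
      ((Finset.range (n * n + 1)).biUnion fun k => proposers P (stateAt P k) w).card := by
  refine (Finset.card_biUnion fun k _ k' _ hkk' => Finset.disjoint_left.mpr ?_).symm
  intro m hm hm'
  have hk := (daInvariant_stateAt P k).mrank_eq_next_of_mem_proposers hm
  have hk' := (daInvariant_stateAt P k').mrank_eq_next_of_mem_proposers hm'
  rcases Nat.lt_or_gt_of_ne hkk' with hlt | hlt
  · exact absurd hk' (mrank_lt_next_stateAt hm hlt).ne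
  · exact absurd hk (mrank_lt_next_stateAt hm' hlt).ne

lemma proposalsTo_le (P : Profile n) (w : Fin n) : P.proposalsTo w ≤ n := by
  rw [proposalsTo_eq_card_biUnion]
  exact (Finset.card_le_univ _).trans_eq (Fintype.card_fin n)

lemma proposedTo_of_proposalsTo_eq {w : Fin n} (hw : P.proposalsTo w = n) (m : Fin n) :
    P.proposedTo m w := by
  rw [proposalsTo_eq_card_biUnion] at hw
  have huniv := Finset.eq_univ_of_card _ (hw.trans (Fintype.card_fin n).symm)
  obtain ⟨k, hk, hmk⟩ := Finset.mem_biUnion.mp (huniv ▸ Finset.mem_univ m)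
  exact ⟨k, Finset.mem_range.mp hk, hmk⟩

lemma held_finalState_of_forall_proposedTo {w : Fin n} (hw : ∀ m, P.proposedTo m w) :
    P.finalState.held w = some (P.topW w) := by
  obtain ⟨k, hk, hmk⟩ := hw (P.topW w)
  obtain ⟨m, hm, hle⟩ := (daInvariant_stateAt P _).exists_held_le_of_mrank_lt _ w
    (mrank_lt_next_stateAt hmk hk)
  have hm_top : (P.wpref w).symm m = ⟨0, w.pos⟩ := by
    apply Fin.ext
    simpa [wrank, topW] using hle
  rw [finalState, hm, topW, ← hm_top, Equiv.apply_symm_apply]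

end Profile

/-- Under MaxProp, every woman other than the one receiving exactly one proposal
is matched by the men-proposing DA to her most preferred man. -/
theorem maxProp_women_get_top (n : ℕ) (P : Profile n) (h : P.MaxProp)
    (wn : Fin n) (hwn : P.proposalsTo wn = 1) :
    ∀ w : Fin n, w ≠ wn → (P.finalState).held w = some (P.topW w) := by
  intro w hw
  have hn : 1 ≤ n := wn.pos
  have hothers : ∑ w' ∈ Finset.univ.erase wn, P.proposalsTo w' =
      ∑ _w' ∈ Finset.univ.erase wn, n := by
    have hsplit := Finset.add_sum_erase Finset.univ P.proposalsTo (Finset.mem_univ wn)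
    rw [← Profile.totalProposals_eq_sum_proposalsTo, h, hwn] at hsplit
    rw [Finset.sum_const, Finset.card_erase_of_mem (Finset.mem_univ wn), Finset.card_univ,
      Fintype.card_fin, smul_eq_mul, Nat.sub_one_mul]
    have : n ≤ n * n := Nat.le_mul_of_pos_left n hn
    omega
  have hw_all : P.proposalsTo w = n :=
    (Finset.sum_eq_sum_iff_of_le fun w' _ => P.proposalsTo_le w').mp hothers w
      (Finset.mem_erase.mpr ⟨hw, Finset.mem_univ w⟩)
  exact Profile.held_finalState_of_forall_proposedTo (Profile.proposedTo_of_proposalsTo_eq hw_all)
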